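/- Let U, W : [0,1]^2 → [0,1] be graphons and q ≥ 1. Then the total variation distance between the distributions of the sampled random graphs satisfies d_tv(μ(q,W), μ(q,U)) ≤ (2^{q²}·q²/4)·‖U − W‖_□, where μ(q,W) is the law of 𝔾(q,W) on graphs with vertex set [q]. -/

import Mathlib

/-!
Telescoping over the edges writes `P(𝔾(q,W) = H) - P(𝔾(q,U) = H)` as a sum of one term per
edge `ij`: the integral of `±(U - W)(x_i, x_j)` times `[0,1]`-valued factors of the other edges.
Those factors split as `F · G` with `F` not involving `x_j` and `G` not involving `x_i`, so after
freezing the remaining coordinates the term reads `∫∫ f(s) g(t) (U - W)(s, t) ds dt`. Replacing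
`f`, then `g`, by the indicator of the set where its partner's partial integral is nonnegative
(or negative) can only increase the absolute value, which leaves a rectangle integral bounded by
the cut norm. Summing over the `2^m` graphs `H` on `m ≤ q²/2` edges gives the bound.
-/

open MeasureTheory
open scoped Classical

noncomputable section

def I01 : Set ℝ := Set.Icc 0 1

/-- The cut norm of a kernel on `[0,1]^2`. -/
def cutNorm (W : ℝ → ℝ → ℝ) : ℝ :=
  sSup {c : ℝ | ∃ S T : Set ℝ, MeasurableSet S ∧ MeasurableSet T ∧
    S ⊆ I01 ∧ T ⊆ I01 ∧ c = |∫ x in S, ∫ y in T, W x y|}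

/-- Labelled graphs on `[q]`, encoded as Boolean functions on ordered pairs `i < j`. -/
abbrev LabGraph (q : ℕ) := {p : Fin q × Fin q // p.1 < p.2} → Bool

/-- The probability that `𝔾(q,W)` equals the labelled graph `H`. -/
def sampleLaw (q : ℕ) (W : ℝ → ℝ → ℝ) (H : LabGraph q) : ℝ :=
  ∫ x : Fin q → ℝ,
    (∏ p : {p : Fin q × Fin q // p.1 < p.2},
      (if H p then W (x p.1.1) (x p.1.2) else 1 - W (x p.1.1) (x p.1.2)))
    ∂(Measure.pi fun _ => volume.restrict I01)

local notation "μ₀" => volume.restrict I01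

instance : IsProbabilityMeasure μ₀ :=
  ⟨by simp [I01]⟩

section Resampling

variable {ι : Type*} [Fintype ι] [DecidableEq ι] {X : ι → Type*} [∀ i, MeasurableSpace (X i)]
  (μ : ∀ i, Measure (X i)) [∀ i, IsProbabilityMeasure (μ i)]

theorem measurePreserving_update (i : ι) :
    MeasurePreserving (fun p : (∀ k, X k) × X i => Function.update p.1 i p.2)
      ((Measure.pi μ).prod (μ i)) (Measure.pi μ) := by
  refine ⟨measurable_update', (Measure.pi_eq fun s hs => ?_).symm⟩
  have hpre : (fun p : (∀ k, X k) × X i => Function.update p.1 i p.2) ⁻¹' Set.univ.pi s =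
      Set.univ.pi (Function.update s i Set.univ) ×ˢ s i := by
    ext ⟨x, t⟩
    simp only [Set.mem_preimage, Set.mem_univ_pi, Set.mem_prod]
    constructor
    · intro h
      refine ⟨fun k => ?_, by simpa using h i⟩
      rcases eq_or_ne k i with rfl | hk
      · simp
      · simpa [hk] using h k
    · rintro ⟨hx, ht⟩ k
      rcases eq_or_ne k i with rfl | hk
      · simpa using ht
      · simpa [hk] using hx k
  rw [Measure.map_apply measurable_update' (MeasurableSet.univ_pi hs), hpre,
    Measure.prod_prod, Measure.pi_pi, ← Finset.mul_prod_erase _ _ (Finset.mem_univ i),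
    ← Finset.mul_prod_erase Finset.univ (fun k => μ k (s k)) (Finset.mem_univ i)]
  simp only [Function.update_self, measure_univ, one_mul]
  rw [mul_comm]
  congr 1
  refine Finset.prod_congr rfl fun k hk => ?_
  rw [Function.update_of_ne (Finset.ne_of_mem_erase hk)]

variable {E : Type*} [NormedAddCommGroup E] {h : (∀ k, X k) → E}

theorem integrable_comp_update (hh : Integrable h (Measure.pi μ)) (i : ι) :
    Integrable (fun p : (∀ k, X k) × X i => h (Function.update p.1 i p.2))
      ((Measure.pi μ).prod (μ i)) :=
  (measurePreserving_update μ i).integrable_comp_of_integrable hh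

theorem integral_eq_integral_integral_update [NormedSpace ℝ E] (hh : Integrable h (Measure.pi μ))
    (i : ι) :
    ∫ x, h x ∂Measure.pi μ = ∫ x, ∫ t, h (Function.update x i t) ∂μ i ∂Measure.pi μ := by
  have hmp := measurePreserving_update μ i
  have hmap := integral_map hmp.measurable.aemeasurable (hmp.map_eq ▸ hh.aestronglyMeasurable)
  rw [hmp.map_eq] at hmap
  rw [hmap, integral_prod _ (integrable_comp_update μ hh i)]

end Resampling

theorem integrable_of_abs_le {α : Type*} [MeasurableSpace α] {ρ : Measure α} [IsFiniteMeasure ρ]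
    {h : α → ℝ} (hm : Measurable h) {C : ℝ} (hC : ∀ x, |h x| ≤ C) : Integrable h ρ :=
  .of_bound hm.aestronglyMeasurable C (ae_of_all _ hC)

theorem exists_abs_integral_mul_le_abs_setIntegral {α : Type*} [MeasurableSpace α]
    {ρ : Measure α} {φ f : α → ℝ} (hφ : Integrable φ ρ) (hφm : Measurable φ) (hf : Measurable f)
    (hf01 : ∀ x, f x ∈ Set.Icc (0 : ℝ) 1) :
    ∃ S, MeasurableSet S ∧ |∫ x, f x * φ x ∂ρ| ≤ |∫ x in S, φ x ∂ρ| := by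
  set P := {x | 0 ≤ φ x}
  have hP : MeasurableSet P := measurableSet_le measurable_const hφm
  have hfφ : Integrable (fun x => f x * φ x) ρ :=
    hφ.bdd_mul hf.aestronglyMeasurable (ae_of_all _ fun x => by
      simpa [abs_of_nonneg (hf01 x).1] using (hf01 x).2)
  -- `f φ` lies between the negative and the positive part of `φ`.
  have hupper : ∫ x, f x * φ x ∂ρ ≤ ∫ x in P, φ x ∂ρ := by
    rw [← integral_indicator hP]
    refine integral_mono hfφ (hφ.indicator hP) fun x => ?_
    by_cases hx : 0 ≤ φ x
    · simpa [P, hx] using mul_le_of_le_one_left hx (hf01 x).2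
    · simpa [P, hx] using mul_nonpos_of_nonneg_of_nonpos (hf01 x).1 (not_le.1 hx).le
  have hlower : ∫ x in Pᶜ, φ x ∂ρ ≤ ∫ x, f x * φ x ∂ρ := by
    rw [← integral_indicator hP.compl]
    refine integral_mono (hφ.indicator hP.compl) hfφ fun x => ?_
    by_cases hx : 0 ≤ φ x
    · simpa [P, hx] using mul_nonneg (hf01 x).1 hx
    · simpa [P, hx] using le_mul_of_le_one_left (not_le.1 hx).le (hf01 x).2
  rcases le_total 0 (∫ x, f x * φ x ∂ρ) with hpos | hneg
  · exact ⟨P, hP, by rw [abs_of_nonneg hpos]; exact hupper.trans (le_abs_self _)⟩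
  · refine ⟨Pᶜ, hP.compl, ?_⟩
    rw [abs_of_nonpos hneg]
    exact (neg_le_neg hlower).trans (neg_le_abs _)

theorem bddAbove_cutNorm_set {D : ℝ → ℝ → ℝ} {C : ℝ} (hD : ∀ x y, |D x y| ≤ C) :
    BddAbove {c : ℝ | ∃ S T : Set ℝ, MeasurableSet S ∧ MeasurableSet T ∧
      S ⊆ I01 ∧ T ⊆ I01 ∧ c = |∫ x in S, ∫ y in T, D x y|} := by
  have hC : 0 ≤ C := (abs_nonneg _).trans (hD 0 0)
  have hvol : ∀ S ⊆ I01, volume.real S ≤ 1 := fun S hS =>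
    (measureReal_mono hS (by simp [I01])).trans_eq (by simp [I01])
  refine ⟨C, ?_⟩
  rintro c ⟨S, T, -, -, hS, hT, rfl⟩
  have hinner : ∀ x, ‖∫ y in T, D x y‖ ≤ C := fun x =>
    (norm_setIntegral_le_of_norm_le_const ((measure_mono hT).trans_lt (by simp [I01]))
      fun y _ => hD x y).trans (mul_le_of_le_one_right hC (hvol T hT))
  exact (norm_setIntegral_le_of_norm_le_const ((measure_mono hS).trans_lt (by simp [I01]))
      fun x _ => hinner x).trans (mul_le_of_le_one_right hC (hvol S hS))

theorem abs_setIntegral_setIntegral_le_cutNorm {D : ℝ → ℝ → ℝ} {C : ℝ}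
    (hD : ∀ x y, |D x y| ≤ C) {S T : Set ℝ} (hS : MeasurableSet S) (hT : MeasurableSet T) :
    |∫ x in S, ∫ y in T, D x y ∂μ₀ ∂μ₀| ≤ cutNorm D := by
  refine le_csSup (bddAbove_cutNorm_set hD)
    ⟨S ∩ I01, T ∩ I01, hS.inter measurableSet_Icc, hT.inter measurableSet_Icc,
      Set.inter_subset_right, Set.inter_subset_right, ?_⟩
  simp only [Measure.restrict_restrict hS, Measure.restrict_restrict hT]

theorem cutNorm_nonneg {D : ℝ → ℝ → ℝ} {C : ℝ} (hD : ∀ x y, |D x y| ≤ C) : 0 ≤ cutNorm D := by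
  simpa using abs_setIntegral_setIntegral_le_cutNorm hD MeasurableSet.empty MeasurableSet.empty

theorem abs_integral_mul_integral_mul_le_cutNorm {D : ℝ → ℝ → ℝ} {C : ℝ}
    (hDm : Measurable (Function.uncurry D)) (hD : ∀ x y, |D x y| ≤ C) {f g : ℝ → ℝ}
    (hf : Measurable f) (hf01 : ∀ x, f x ∈ Set.Icc (0 : ℝ) 1)
    (hg : Measurable g) (hg01 : ∀ x, g x ∈ Set.Icc (0 : ℝ) 1) :
    |∫ x, f x * ∫ y, g y * D x y ∂μ₀ ∂μ₀| ≤ cutNorm D := by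
  have hKm : Measurable (Function.uncurry fun x y => g y * D x y) :=
    (hg.comp measurable_snd).mul hDm
  have hKb : ∀ x y, |g y * D x y| ≤ C := fun x y => by
    rw [abs_mul, abs_of_nonneg (hg01 y).1]
    exact (mul_le_of_le_one_left (abs_nonneg _) (hg01 y).2).trans (hD x y)
  have hDTm : Measurable (Function.uncurry fun y x => D x y) := hDm.comp measurable_swap
  obtain ⟨S, hS, hfS⟩ := exists_abs_integral_mul_le_abs_setIntegral
    (integrable_of_abs_le (ρ := (μ₀).prod μ₀) hKm fun p => hKb p.1 p.2).integral_prod_left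
    hKm.stronglyMeasurable.integral_prod_right.measurable hf hf01
  obtain ⟨T, hT, hgT⟩ := exists_abs_integral_mul_le_abs_setIntegral
    (integrable_of_abs_le (ρ := (μ₀).prod ((μ₀).restrict S)) hDTm
      fun p => hD p.2 p.1).integral_prod_left
    hDTm.stronglyMeasurable.integral_prod_right.measurable hg hg01
  have hswapS : ∫ x in S, ∫ y, g y * D x y ∂μ₀ ∂μ₀ = ∫ y, g y * ∫ x in S, D x y ∂μ₀ ∂μ₀ := by
    rw [integral_integral_swap (integrable_of_abs_le hKm fun p => hKb p.1 p.2)]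
    simp_rw [integral_const_mul]
  have hswapT : ∫ y in T, ∫ x in S, D x y ∂μ₀ ∂μ₀ = ∫ x in S, ∫ y in T, D x y ∂μ₀ ∂μ₀ :=
    integral_integral_swap (integrable_of_abs_le hDTm fun p => hD p.2 p.1)
  calc |∫ x, f x * ∫ y, g y * D x y ∂μ₀ ∂μ₀|
      ≤ |∫ y, g y * ∫ x in S, D x y ∂μ₀ ∂μ₀| := hswapS ▸ hfS
    _ ≤ |∫ x in S, ∫ y in T, D x y ∂μ₀ ∂μ₀| := hswapT ▸ hgT
    _ ≤ cutNorm D := abs_setIntegral_setIntegral_le_cutNorm hD hS hT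

theorem abs_integral_mul_mul_le_cutNorm {ι : Type*} [Fintype ι] [DecidableEq ι]
    {D : ℝ → ℝ → ℝ} {C : ℝ} (hDm : Measurable (Function.uncurry D)) (hD : ∀ x y, |D x y| ≤ C)
    {i j : ι} (hij : i ≠ j) {F G : (ι → ℝ) → ℝ} (hFm : Measurable F) (hGm : Measurable G)
    (hF01 : ∀ x, F x ∈ Set.Icc (0 : ℝ) 1) (hG01 : ∀ x, G x ∈ Set.Icc (0 : ℝ) 1)
    (hFj : DependsOn F {j}ᶜ) (hGi : DependsOn G {i}ᶜ) :
    |∫ x, F x * G x * D (x i) (x j) ∂Measure.pi fun _ => μ₀| ≤ cutNorm D := by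
  set h : (ι → ℝ) → ℝ := fun x => F x * G x * D (x i) (x j)
  have hDij : Measurable fun x : ι → ℝ => D (x i) (x j) :=
    hDm.comp (f := fun x : ι → ℝ => (x i, x j)) (by fun_prop)
  have hhm : Measurable h := (hFm.mul hGm).mul hDij
  have hh : Integrable h (Measure.pi fun _ => μ₀) := integrable_of_abs_le hhm fun x => by
    rw [abs_mul, abs_mul, abs_of_nonneg (hF01 x).1, abs_of_nonneg (hG01 x).1]
    exact (mul_le_of_le_one_left (abs_nonneg _)
      (mul_le_one₀ (hF01 x).2 (hG01 x).1 (hG01 x).2)).trans (hD _ _)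
  have hfactor : ∀ x : ι → ℝ,
      ∫ s, ∫ t, h (Function.update (Function.update x i s) j t) ∂μ₀ ∂μ₀ =
        ∫ s, F (Function.update x i s) * ∫ t, G (Function.update x j t) * D s t ∂μ₀ ∂μ₀ := by
    intro x
    refine integral_congr_ae (ae_of_all _ fun s => ?_)
    simp only [← integral_const_mul]
    refine integral_congr_ae (ae_of_all _ fun t => ?_)
    have hFupd : F (Function.update (Function.update x i s) j t) = F (Function.update x i s) :=
      hFj fun k hk => Function.update_of_ne hk _ _
    have hGupd : G (Function.update (Function.update x i s) j t) = G (Function.update x j t) := by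
      rw [Function.update_comm hij]
      exact hGi fun k hk => Function.update_of_ne hk _ _
    simp only [h, hFupd, hGupd, Function.update_self, Function.update_of_ne hij]
    ring
  rw [integral_eq_integral_integral_update _ hh j,
    integral_eq_integral_integral_update _ (integrable_comp_update _ hh j).integral_prod_left i]
  simp only [hfactor]
  rw [← Real.norm_eq_abs]
  refine (norm_integral_le_of_norm_le_const (C := cutNorm D) (ae_of_all _ fun x => ?_)).trans_eq ?_
  · exact abs_integral_mul_integral_mul_le_cutNorm hDm hD (hFm.comp (measurable_update x))
      (fun s => hF01 _) (hGm.comp (measurable_update x)) (fun t => hG01 _)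
  · simp

theorem Finset.exists_prod_sub_prod_eq_sum {ι R : Type*} [CommRing R] [DecidableEq ι]
    (s : Finset ι) (a b : ι → R) :
    ∃ c : ι → ι → R, (∀ e f, c e f = a f ∨ c e f = b f) ∧
      ∏ i ∈ s, a i - ∏ i ∈ s, b i = ∑ e ∈ s, (a e - b e) * ∏ f ∈ s.erase e, c e f := by
  induction s using Finset.induction_on with
  | empty => exact ⟨fun _ => a, fun _ _ => Or.inl rfl, by simp⟩
  | insert e s he ih =>
    obtain ⟨c, hc, hs⟩ := ih
    -- `∏ a - ∏ b = (a e - b e) ∏_s a + b e (∏_s a - ∏_s b)`: the new term takes its other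
    -- factors from `a`, and the old terms gain the factor `b e`.
    refine ⟨fun e' f => if e' = e then a f else if f = e then b f else c e' f, ?_, ?_⟩
    · intro e' f
      dsimp only
      split_ifs with h₁ h₂
      · exact Or.inl rfl
      · exact h₂ ▸ Or.inr rfl
      · exact hc e' f
    have hrest : ∀ e' ∈ s, ∏ f ∈ (insert e s).erase e',
        (if e' = e then a f else if f = e then b f else c e' f) =
          b e * ∏ f ∈ s.erase e', c e' f := by
      intro e' he'
      have hne : e' ≠ e := ne_of_mem_of_not_mem he' he
      rw [Finset.erase_insert_of_ne hne.symm,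
        Finset.prod_insert fun h => he (Finset.mem_of_mem_erase h)]
      simp only [hne, if_false, if_true]
      congr 1
      exact Finset.prod_congr rfl fun f hf =>
        if_neg (ne_of_mem_of_not_mem (Finset.mem_of_mem_erase hf) he)
    rw [Finset.prod_insert he, Finset.prod_insert he, Finset.sum_insert he, Finset.erase_insert he,
      Finset.sum_congr rfl fun e' he' => congrArg _ (hrest e' he')]
    simp only [if_true]
    simp_rw [mul_left_comm _ (b e), ← Finset.mul_sum, ← hs]
    ring

theorem DependsOn.finset_prod {ι κ : Type*} {X : ι → Type*} {t : Set ι} {s : Finset κ}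
    {c : κ → (∀ i, X i) → ℝ} (hc : ∀ k ∈ s, DependsOn (c k) t) :
    DependsOn (fun x => ∏ k ∈ s, c k x) t :=
  fun _ _ h => Finset.prod_congr rfl fun k hk => hc k hk h

def edgeFactor (W : ℝ → ℝ → ℝ) (b : Bool) (s t : ℝ) : ℝ :=
  if b then W s t else 1 - W s t

section EdgeFactor

variable {W : ℝ → ℝ → ℝ}

theorem edgeFactor_mem (hW : ∀ x y, W x y ∈ Set.Icc (0 : ℝ) 1) (b : Bool) (s t : ℝ) :
    edgeFactor W b s t ∈ Set.Icc (0 : ℝ) 1 := by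
  obtain ⟨h₀, h₁⟩ := hW s t
  cases b <;> simp only [edgeFactor, Bool.false_eq_true, if_true, if_false, Set.mem_Icc] <;>
    constructor <;> linarith

theorem edgeFactor_sub_edgeFactor (U W : ℝ → ℝ → ℝ) (b : Bool) (s t : ℝ) :
    edgeFactor W b s t - edgeFactor U b s t = (if b then -1 else 1) * (U s t - W s t) := by
  cases b <;> simp only [edgeFactor, Bool.false_eq_true, if_true, if_false] <;> ring

variable {ι : Type*} (b : Bool) (i j : ι)

theorem measurable_edgeFactor_apply (hW : Measurable (Function.uncurry W)) :
    Measurable fun x : ι → ℝ => edgeFactor W b (x i) (x j) := by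
  have hWij : Measurable fun x : ι → ℝ => W (x i) (x j) :=
    hW.comp (f := fun x : ι → ℝ => (x i, x j)) (by fun_prop)
  cases b
  · exact measurable_const.sub hWij
  · exact hWij

theorem dependsOn_edgeFactor_apply (W : ℝ → ℝ → ℝ) :
    DependsOn (fun x : ι → ℝ => edgeFactor W b (x i) (x j)) {i, j} := fun x y h => by
  simp only [h i (by simp), h j (by simp)]

end EdgeFactor

theorem abs_integral_prod_sub_prod_le {ι Ω : Type*} [Fintype ι] [DecidableEq ι]
    [MeasurableSpace Ω] {ν : Measure Ω} [IsFiniteMeasure ν] {a b : ι → Ω → ℝ}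
    (ham : ∀ e, Measurable (a e)) (hbm : ∀ e, Measurable (b e))
    (ha01 : ∀ e ω, a e ω ∈ Set.Icc (0 : ℝ) 1) (hb01 : ∀ e ω, b e ω ∈ Set.Icc (0 : ℝ) 1) {ε : ℝ}
    (hε : ∀ e (c : ι → Ω → ℝ), (∀ f, c f = a f ∨ c f = b f) →
      |∫ ω, (a e ω - b e ω) * ∏ f ∈ Finset.univ.erase e, c f ω ∂ν| ≤ ε) :
    |∫ ω, ∏ e, a e ω ∂ν - ∫ ω, ∏ e, b e ω ∂ν| ≤ Fintype.card ι * ε := by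
  have hprod : ∀ g : ι → Ω → ℝ, (∀ e, Measurable (g e)) → (∀ e ω, g e ω ∈ Set.Icc (0 : ℝ) 1) →
      Integrable (fun ω => ∏ e, g e ω) ν := fun g hgm hg01 =>
    integrable_of_abs_le (Finset.measurable_prod _ fun e _ => hgm e) fun ω => by
      obtain ⟨h₀, h₁⟩ := unitInterval.prod_mem fun e _ => hg01 e ω
      rwa [abs_of_nonneg h₀]
  obtain ⟨c, hc, hdecomp⟩ := Finset.univ.exists_prod_sub_prod_eq_sum a b
  have hcm : ∀ e f, Measurable (c e f) := fun e f => by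
    rcases hc e f with h | h <;> rw [h]
    exacts [ham f, hbm f]
  have hc01 : ∀ e f ω, c e f ω ∈ Set.Icc (0 : ℝ) 1 := fun e f ω => by
    rcases hc e f with h | h <;> rw [h]
    exacts [ha01 f ω, hb01 f ω]
  set T : ι → Ω → ℝ := fun e ω => (a e ω - b e ω) * ∏ f ∈ Finset.univ.erase e, c e f ω
  have hT : ∀ e, Integrable (T e) ν := fun e =>
    integrable_of_abs_le (((ham e).sub (hbm e)).mul (Finset.measurable_prod _ fun f _ => hcm e f))
      fun ω => by
        obtain ⟨h₀, h₁⟩ := unitInterval.prod_mem fun f _ => hc01 e f ω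
        rw [abs_mul, abs_of_nonneg h₀]
        exact mul_le_one₀ (Real.dist_le_of_mem_Icc_01 (ha01 e ω) (hb01 e ω)) h₀ h₁
  have htelescope : ∀ ω, ∏ e, a e ω - ∏ e, b e ω = ∑ e, T e ω := fun ω => by
    simpa only [Pi.sub_apply, Finset.prod_apply, Finset.sum_apply, Pi.mul_apply]
      using congrFun hdecomp ω
  calc |∫ ω, ∏ e, a e ω ∂ν - ∫ ω, ∏ e, b e ω ∂ν|
      = |∑ e, ∫ ω, T e ω ∂ν| := by
        rw [← integral_sub (hprod a ham ha01) (hprod b hbm hb01),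
          ← integral_finsetSum _ fun e _ => hT e]
        simp_rw [htelescope]
    _ ≤ ∑ e, |∫ ω, T e ω ∂ν| := Finset.abs_sum_le_sum_abs _ _
    _ ≤ ∑ _e : ι, ε := Finset.sum_le_sum fun e _ => hε e (c e) (hc e)
    _ = Fintype.card ι * ε := by simp

section CompleteGraph

variable {ι : Type*} [Fintype ι] [LinearOrder ι]

theorem abs_integral_mul_prod_erase_le_cutNorm {D : ℝ → ℝ → ℝ} {C : ℝ}
    (hDm : Measurable (Function.uncurry D)) (hD : ∀ x y, |D x y| ≤ C)
    (e : {p : ι × ι // p.1 < p.2}) {c : {p : ι × ι // p.1 < p.2} → (ι → ℝ) → ℝ}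
    (hcm : ∀ f, Measurable (c f)) (hc01 : ∀ f x, c f x ∈ Set.Icc (0 : ℝ) 1)
    (hcdep : ∀ f, DependsOn (c f) {f.1.1, f.1.2}) :
    |∫ x, D (x e.1.1) (x e.1.2) * ∏ f ∈ Finset.univ.erase e, c f x ∂Measure.pi fun _ => μ₀| ≤
      cutNorm D := by
  obtain ⟨⟨i, j⟩, hij⟩ := e
  -- The factors of edges avoiding `j` do not see `x j`; the other edges contain `j`, hence not `i`.
  set avoidsJ : {p : ι × ι // p.1 < p.2} → Prop := fun f => f.1.1 ≠ j ∧ f.1.2 ≠ j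
  have hF : DependsOn (fun x => ∏ f ∈ (Finset.univ.erase ⟨(i, j), hij⟩).filter avoidsJ, c f x)
      {j}ᶜ := by
    refine DependsOn.finset_prod fun f hf => (hcdep f).mono ?_
    obtain ⟨-, h₁, h₂⟩ := Finset.mem_filter.1 hf
    simp only [Set.insert_subset_iff, Set.singleton_subset_iff, Set.mem_compl_iff,
      Set.mem_singleton_iff]
    exact ⟨h₁, h₂⟩
  have hG : DependsOn
      (fun x => ∏ f ∈ (Finset.univ.erase ⟨(i, j), hij⟩).filter (¬avoidsJ ·), c f x) {i}ᶜ := by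
    refine DependsOn.finset_prod fun f hf => (hcdep f).mono ?_
    obtain ⟨hfe, hfj⟩ := Finset.mem_filter.1 hf
    obtain ⟨⟨k, l⟩, hkl⟩ := f
    have hne : (k, l) ≠ (i, j) := fun h => Finset.ne_of_mem_erase hfe (Subtype.ext h)
    simp only [avoidsJ, not_and_or, not_not] at hfj
    simp only [Set.insert_subset_iff, Set.singleton_subset_iff, Set.mem_compl_iff,
      Set.mem_singleton_iff]
    rcases hfj with rfl | rfl
    · exact ⟨hij.ne', (hij.trans hkl).ne'⟩
    · exact ⟨fun hki => hne (by rw [hki]), hij.ne'⟩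
  have hsplit : ∀ x : ι → ℝ, D (x i) (x j) * ∏ f ∈ Finset.univ.erase ⟨(i, j), hij⟩, c f x =
      (∏ f ∈ (Finset.univ.erase ⟨(i, j), hij⟩).filter avoidsJ, c f x) *
        (∏ f ∈ (Finset.univ.erase ⟨(i, j), hij⟩).filter (¬avoidsJ ·), c f x) * D (x i) (x j) :=
    fun x => by rw [Finset.prod_filter_mul_prod_filter_not, mul_comm]
  simp_rw [hsplit]
  exact abs_integral_mul_mul_le_cutNorm hDm hD hij.ne
    (Finset.measurable_prod _ fun f _ => hcm f) (Finset.measurable_prod _ fun f _ => hcm f)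
    (fun x => unitInterval.prod_mem fun f _ => hc01 f x)
    (fun x => unitInterval.prod_mem fun f _ => hc01 f x) hF hG

theorem abs_integral_prod_edgeFactor_sub_le {U W : ℝ → ℝ → ℝ}
    (hUm : Measurable (Function.uncurry U)) (hWm : Measurable (Function.uncurry W))
    (hU01 : ∀ x y, U x y ∈ Set.Icc (0 : ℝ) 1) (hW01 : ∀ x y, W x y ∈ Set.Icc (0 : ℝ) 1)
    (H : {p : ι × ι // p.1 < p.2} → Bool) :
    |∫ x, ∏ e, edgeFactor W (H e) (x e.1.1) (x e.1.2) ∂(Measure.pi fun _ => μ₀) -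
        ∫ x, ∏ e, edgeFactor U (H e) (x e.1.1) (x e.1.2) ∂(Measure.pi fun _ => μ₀)| ≤
      Fintype.card {p : ι × ι // p.1 < p.2} * cutNorm (fun x y => U x y - W x y) := by
  have hD : ∀ x y, |U x y - W x y| ≤ 1 := fun x y =>
    Real.dist_le_of_mem_Icc_01 (hU01 x y) (hW01 x y)
  refine abs_integral_prod_sub_prod_le (fun e => measurable_edgeFactor_apply _ _ _ hWm)
    (fun e => measurable_edgeFactor_apply _ _ _ hUm) (fun e x => edgeFactor_mem hW01 _ _ _)
    (fun e x => edgeFactor_mem hU01 _ _ _) fun e c hc => ?_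
  have hc' : ∀ f, Measurable (c f) ∧ (∀ x, c f x ∈ Set.Icc (0 : ℝ) 1) ∧
      DependsOn (c f) {f.1.1, f.1.2} := fun f => by
    rcases hc f with h | h <;> rw [h]
    · exact ⟨measurable_edgeFactor_apply _ _ _ hWm, fun x => edgeFactor_mem hW01 _ _ _,
        dependsOn_edgeFactor_apply _ _ _ _⟩
    · exact ⟨measurable_edgeFactor_apply _ _ _ hUm, fun x => edgeFactor_mem hU01 _ _ _,
        dependsOn_edgeFactor_apply _ _ _ _⟩
  simp_rw [edgeFactor_sub_edgeFactor, mul_assoc, integral_const_mul, abs_mul]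
  refine (mul_le_of_le_one_left (abs_nonneg _) (by split_ifs <;> simp)).trans ?_
  exact abs_integral_mul_prod_erase_le_cutNorm (D := fun x y => U x y - W x y) (hUm.sub hWm) hD e
    (fun f => (hc' f).1) (fun f => (hc' f).2.1) (fun f => (hc' f).2.2)

end CompleteGraph

theorem two_mul_card_subtype_lt_le_card_sq (ι : Type*) [Fintype ι] [LinearOrder ι] :
    2 * Fintype.card {p : ι × ι // p.1 < p.2} ≤ Fintype.card ι ^ 2 := by
  have hinj : Function.Injective fun p : {p : ι × ι // p.1 < p.2} ⊕ {p : ι × ι // p.1 < p.2} =>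
      p.elim Subtype.val (Prod.swap ∘ Subtype.val) := by
    rintro (⟨p, hp⟩ | ⟨p, hp⟩) (⟨p', hp'⟩ | ⟨p', hp'⟩) h <;>
      simp only [Sum.elim_inl, Sum.elim_inr, Function.comp_apply, Prod.swap_inj] at h <;> subst h
    · rfl
    · exact absurd hp (lt_asymm hp')
    · exact absurd hp (lt_asymm hp')
    · rfl
  simpa [two_mul, sq] using Fintype.card_le_of_injective _ hinj

theorem tv_distance_of_sampled_graphs_general (U W : ℝ → ℝ → ℝ)
    (hUmeas : Measurable fun p : ℝ × ℝ => U p.1 p.2)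
    (hWmeas : Measurable fun p : ℝ × ℝ => W p.1 p.2)
    (hUbd : ∀ x y, U x y ∈ Set.Icc (0 : ℝ) 1)
    (hWbd : ∀ x y, W x y ∈ Set.Icc (0 : ℝ) 1)
    (q : ℕ) :
    (1 / 2) * ∑ H : LabGraph q, |sampleLaw q W H - sampleLaw q U H| ≤
      (2 : ℝ) ^ (q ^ 2) * (q : ℝ) ^ 2 / 4 * cutNorm (fun x y => U x y - W x y) := by
  set m := Fintype.card {p : Fin q × Fin q // p.1 < p.2}
  set c := cutNorm fun x y => U x y - W x y
  have hc : 0 ≤ c := cutNorm_nonneg fun x y => Real.dist_le_of_mem_Icc_01 (hUbd x y) (hWbd x y)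
  have hsum : ∑ H : LabGraph q, |sampleLaw q W H - sampleLaw q U H| ≤ 2 ^ m * (m * c) := by
    refine (Finset.sum_le_card_nsmul _ _ _ fun H _ =>
      abs_integral_prod_edgeFactor_sub_le hUmeas hWmeas hUbd hWbd H).trans_eq ?_
    simp [m, c]
  have hm : 2 * m ≤ q ^ 2 := by simpa using two_mul_card_subtype_lt_le_card_sq (Fin q)
  have hm' : (m : ℝ) ≤ q ^ 2 / 2 := by
    rw [le_div_iff₀ two_pos, mul_comm]
    exact_mod_cast hm
  calc (1 / 2) * ∑ H : LabGraph q, |sampleLaw q W H - sampleLaw q U H|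
      ≤ 2 ^ m * m / 2 * c := by linarith
    _ ≤ 2 ^ (q ^ 2) * (q ^ 2 / 2) / 2 * c := by
        gcongr
        · norm_num
        · omega
    _ = 2 ^ (q ^ 2) * q ^ 2 / 4 * c := by ring

theorem tv_distance_of_sampled_graphs (U W : ℝ → ℝ → ℝ)
    (hUmeas : Measurable fun p : ℝ × ℝ => U p.1 p.2)
    (hWmeas : Measurable fun p : ℝ × ℝ => W p.1 p.2)
    (hUsym : ∀ x y, U x y = U y x) (hWsym : ∀ x y, W x y = W y x)
    (hUbd : ∀ x y, U x y ∈ Set.Icc (0 : ℝ) 1)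
    (hWbd : ∀ x y, W x y ∈ Set.Icc (0 : ℝ) 1)
    (q : ℕ) (hq : 1 ≤ q) :
    (1 / 2) * ∑ H : LabGraph q, |sampleLaw q W H - sampleLaw q U H| ≤
      (2 : ℝ) ^ (q ^ 2) * (q : ℝ) ^ 2 / 4 * cutNorm (fun x y => U x y - W x y) :=
  tv_distance_of_sampled_graphs_general U W hUmeas hWmeas hUbd hWbd q
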